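/- Let Φ ∈ k⟨⟨X_Γ⟩⟩ be group-like for Δ, and let ψ ∈ k⟨⟨X_Γ⟩⟩ be primitive with zero constant term. Then exp(s_ψ)(Φ) is group-like for Δ, where s_ψ(φ) = ψφ + d_ψ(φ) with d_ψ the special derivation (d_ψ(x₀)=0, d_ψ(x_σ)=[x_σ,t_σ(ψ)]). -/

import Mathlib

/- Noncommutative formal power series over the alphabet X_Γ = {x₀} ∪ {x_σ : σ ∈ Γ},
modelled as coefficient functions `List (Option Γ) → k` (none = x₀, some σ = x_σ). -/

open Finset

/-- Noncommutative series: a coefficient for each word. -/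
abbrev Ser (X k : Type) : Type := List X → k

/-- The finset of all words of length at most `L` over a finite alphabet. -/
def wordsLe (X : Type) [Fintype X] [DecidableEq X] (L : ℕ) : Finset (List X) :=
  (Finset.range (L + 1)).biUnion fun n =>
    (Fintype.piFinset fun _ : Fin n => (Finset.univ : Finset X)).image List.ofFn

/-- The unit series 1. -/
def sone {X k : Type} [CommRing k] : Ser X k := fun w =>
  match w with
  | [] => 1
  | _ => 0

/-- Product of noncommutative series (Cauchy product over factorizations of a word). -/
def smul2 {X k : Type} [CommRing k] (F G : Ser X k) : Ser X k := fun w =>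
  ∑ p ∈ Finset.range (w.length + 1), F (w.take p) * G (w.drop p)

/-- The series given by a single word with coefficient 1. -/
def monom {X k : Type} [CommRing k] [DecidableEq X] (v : List X) : Ser X k :=
  fun w => if w = v then 1 else 0

/-- The automorphism t_σ of `k⟨⟨X_Γ⟩⟩` fixing x₀ and sending x_τ to x_{στ},
acting on series. -/
def tser {Γ k : Type} [CommGroup Γ] [CommRing k] (σ : Γ) (F : Ser (Option Γ) k) :
    Ser (Option Γ) k :=
  fun w => F (w.map (Option.map (fun τ => σ⁻¹ * τ)))

/-- The value of the special derivation d_ψ on the letters: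
`d_ψ(x₀) = 0` and `d_ψ(x_σ) = [x_σ, t_σ(ψ)]`. -/
def dlet {Γ k : Type} [CommGroup Γ] [DecidableEq Γ] [CommRing k]
    (ψ : Ser (Option Γ) k) : Option Γ → Ser (Option Γ) k
  | none => fun _ => 0
  | some σ => fun w =>
      smul2 (monom [some σ]) (tser σ ψ) w - smul2 (tser σ ψ) (monom [some σ]) w

/-- The special derivation d_ψ evaluated on a single word. -/
def dword {Γ k : Type} [CommGroup Γ] [DecidableEq Γ] [CommRing k]
    (ψ : Ser (Option Γ) k) (w : List (Option Γ)) : Ser (Option Γ) k := fun u =>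
  ∑ i ∈ Finset.range w.length,
    smul2 (monom (w.take i)) (smul2 (dlet ψ (w.getD i none)) (monom (w.drop (i + 1)))) u

/-- The (Γ-equivariant) special derivation d_ψ of `k⟨⟨X_Γ⟩⟩`, with
`d_ψ(x₀) = 0` and `d_ψ(x_σ) = [x_σ, t_σ(ψ)]`, applied to a series. -/
def dser {Γ k : Type} [CommGroup Γ] [Fintype Γ] [DecidableEq Γ] [CommRing k]
    (ψ F : Ser (Option Γ) k) : Ser (Option Γ) k := fun u =>
  ∑ w ∈ wordsLe (Option Γ) u.length, F w * dword ψ w u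

/-- The tangential action operator `s_ψ(φ) = ψ·φ + d_ψ(φ)`. -/
def sact {Γ k : Type} [CommGroup Γ] [Fintype Γ] [DecidableEq Γ] [CommRing k]
    (ψ F : Ser (Option Γ) k) : Ser (Option Γ) k := fun u =>
  smul2 ψ F u + dser ψ F u

/-- The Ihara bracket `⟨ψ₁, ψ₂⟩ := s_{ψ₁}(ψ₂) − s_{ψ₂}(ψ₁)`. -/
def ibr {Γ k : Type} [CommGroup Γ] [Fintype Γ] [DecidableEq Γ] [CommRing k]
    (ψ₁ ψ₂ : Ser (Option Γ) k) : Ser (Option Γ) k := fun u =>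
  sact ψ₁ ψ₂ u - sact ψ₂ ψ₁ u

/-- The word extracted from `w` along a subset `S` of its positions. -/
def extractL {X : Type} (w : List X) (S : Finset (Fin w.length)) : List X :=
  ((List.finRange w.length).filter (· ∈ S)).map w.get

/-- The coefficient of `u ⊗ v` in `Δ(w)`, where Δ is the coproduct making the letters
primitive: the number of ways to split the positions of `w` into a subset extracting to
`u` and a complementary subset extracting to `v`. -/
def dcoeff {X : Type} [DecidableEq X] (w u v : List X) : ℕ :=
  ((Finset.univ : Finset (Finset (Fin w.length))).filter
    (fun S => extractL w S = u ∧ extractL w Sᶜ = v)).card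

/-- The coefficient of `u ⊗ v` in `Δ(F)` for a series `F`. -/
def Del {X k : Type} [Fintype X] [DecidableEq X] [CommRing k]
    (F : Ser X k) (u v : List X) : k :=
  ∑ w ∈ wordsLe X (u.length + v.length), F w * (dcoeff w u v : k)

/-- A series is group-like when `ΔΦ = Φ ⊗̂ Φ` and `(Φ|1) = 1`. -/
def IsGroupLike {X k : Type} [Fintype X] [DecidableEq X] [CommRing k]
    (F : Ser X k) : Prop :=
  F [] = 1 ∧ ∀ u v, Del F u v = F u * F v

/-- A series is primitive when `Δψ = ψ ⊗ 1 + 1 ⊗ ψ`. -/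
def IsPrimitive {X k : Type} [Fintype X] [DecidableEq X] [CommRing k]
    (F : Ser X k) : Prop :=
  ∀ u v, Del F u v = (if v = [] then F u else 0) + (if u = [] then F v else 0)

/-- The exponential `exp(s_ψ)` of the tangential action operator, applied to a series.
Since `ψ` has zero constant term, `s_ψ` raises the weight, so the coefficient of a word
`u` in `exp(s_ψ)(H)` only involves finitely many terms of the exponential series. -/
def expS {Γ k : Type} [CommGroup Γ] [Fintype Γ] [DecidableEq Γ] [CommRing k] [Algebra ℚ k]
    (ψ H : Ser (Option Γ) k) : Ser (Option Γ) k := fun u =>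
  ∑ n ∈ Finset.range (u.length + 1),
    algebraMap ℚ k ((n.factorial : ℚ))⁻¹ * ((sact ψ)^[n] H) u

lemma mem_wordsLe {X : Type} [Fintype X] [DecidableEq X] {L : ℕ} {w : List X} :
    w ∈ wordsLe X L ↔ w.length ≤ L := by
  simp only [wordsLe, Finset.mem_biUnion, Finset.mem_range, Finset.mem_image]
  constructor
  · rintro ⟨n, hn, f, -, rfl⟩
    simpa using Nat.lt_succ_iff.mp hn
  · intro h
    exact ⟨w.length, Nat.lt_succ_of_le h, w.get, by simp [Fintype.mem_piFinset], by
      simp [List.ofFn_get]⟩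

/-- Recursive shuffle-count. -/
def shc {X : Type} [DecidableEq X] : List X → List X → List X → ℕ
  | [], u, v => if u = [] ∧ v = [] then 1 else 0
  | a :: w, u, v =>
      (match u with
        | b :: u' => if b = a then shc w u' v else 0
        | [] => 0)
      + (match v with
        | c :: v' => if c = a then shc w u v' else 0
        | [] => 0)

def consSet {n : ℕ} (b : Bool) (T : Finset (Fin n)) : Finset (Fin (n + 1)) :=
  (if b then {(0 : Fin (n+1))} else ∅) ∪ T.map ⟨Fin.succ, Fin.succ_injective n⟩

lemma mem_consSet {n : ℕ} {b : Bool} {T : Finset (Fin n)} {i : Fin (n+1)} :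
    i ∈ consSet b T ↔ (i = 0 ∧ b) ∨ ∃ j ∈ T, Fin.succ j = i := by
  cases b <;> simp [consSet]

noncomputable def consSetEquiv (n : ℕ) : Bool × Finset (Fin n) ≃ Finset (Fin (n + 1)) where
  toFun p := consSet p.1 p.2
  invFun S := (decide ((0 : Fin (n+1)) ∈ S),
    S.preimage Fin.succ (Fin.succ_injective n).injOn)
  left_inv := by
    rintro ⟨b, T⟩
    refine Prod.ext ?_ ?_
    · simp only
      cases b <;> simp [mem_consSet, Fin.succ_ne_zero, eq_comm]
    · ext j
      simp [Finset.mem_preimage, mem_consSet, Fin.succ_ne_zero, Fin.succ_inj]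
  right_inv := by
    intro S
    ext i
    induction i using Fin.cases with
    | zero => simp [mem_consSet, Fin.succ_ne_zero]
    | succ j => simp [mem_consSet, Fin.succ_ne_zero, Fin.succ_inj]

lemma consSet_compl {n : ℕ} (b : Bool) (T : Finset (Fin n)) :
    (consSet b T)ᶜ = consSet (!b) Tᶜ := by
  ext i
  induction i using Fin.cases with
  | zero => cases b <;> simp [mem_consSet, Fin.succ_ne_zero]
  | succ j => cases b <;> simp [mem_consSet, Fin.succ_ne_zero, Fin.succ_inj]

lemma extractL_cons {X : Type} (a : X) (w : List X) (b : Bool) (T : Finset (Fin w.length)) :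
    extractL (a :: w) (consSet b T) =
      (if b then [a] else []) ++ extractL w T := by
  unfold extractL
  have hfr : List.finRange ((a :: w).length)
      = (0 : Fin (w.length + 1)) :: (List.finRange w.length).map Fin.succ :=
    List.finRange_succ (n := w.length)
  rw [hfr, List.filter_cons, List.filter_map]
  simp only [Function.comp_def]
  have hsucc : ∀ j : Fin w.length, (Fin.succ j ∈ consSet b T) ↔ j ∈ T := fun j => by
    simp [mem_consSet, Fin.succ_ne_zero, Fin.succ_inj]
  have h0 : ((0 : Fin (w.length + 1)) ∈ consSet b T) ↔ b = true := by
    cases b <;> simp [mem_consSet, Fin.succ_ne_zero, eq_comm]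
  simp only [hsucc, h0]
  cases b <;> simp [List.map_map, Function.comp_def]

lemma dcoeff_nil {X : Type} [DecidableEq X] (u v : List X) :
    dcoeff ([] : List X) u v = if u = [] ∧ v = [] then 1 else 0 := by
  have hex : ∀ S : Finset (Fin ([] : List X).length), extractL [] S = [] := fun S => rfl
  unfold dcoeff
  by_cases h : u = [] ∧ v = []
  · obtain ⟨rfl, rfl⟩ := h
    rw [if_pos ⟨rfl, rfl⟩, Finset.filter_true_of_mem (fun S _ => ⟨hex S, hex Sᶜ⟩)]
    simp
  · rw [Finset.filter_false_of_mem, Finset.card_empty, if_neg h]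
    intro S _
    rw [hex, hex]
    intro hc
    exact h ⟨hc.1.symm ▸ rfl, hc.2.symm ▸ rfl⟩

lemma dcoeff_cons {X : Type} [DecidableEq X] (a : X) (w u v : List X) :
    dcoeff (a :: w) u v =
      (match u with | b :: u' => if b = a then dcoeff w u' v else 0 | [] => 0)
      + (match v with | c :: v' => if c = a then dcoeff w u v' else 0 | [] => 0) := by
  unfold dcoeff
  rw [Finset.card_filter]
  refine Eq.trans ((Fintype.sum_equiv (consSetEquiv w.length)
    (fun p : Bool × Finset (Fin w.length) =>
      if extractL (a :: w) (consSet p.1 p.2) = u ∧ extractL (a :: w) (consSet p.1 p.2)ᶜ = v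
        then (1 : ℕ) else 0)
    (fun S => if extractL (a :: w) S = u ∧ extractL (a :: w) Sᶜ = v then 1 else 0)
    (fun p => rfl)).symm) ?_
  rw [Fintype.sum_prod_type, Fintype.sum_bool]
  have lhs1 : ∀ T : Finset (Fin w.length),
      (if extractL (a :: w) (consSet true T) = u ∧ extractL (a :: w) (consSet true T)ᶜ = v
        then (1 : ℕ) else 0)
      = (if a :: extractL w T = u ∧ extractL w Tᶜ = v then 1 else 0) := by
    intro T
    rw [consSet_compl, extractL_cons, extractL_cons]
    simp
  have lhs2 : ∀ T : Finset (Fin w.length),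
      (if extractL (a :: w) (consSet false T) = u ∧ extractL (a :: w) (consSet false T)ᶜ = v
        then (1 : ℕ) else 0)
      = (if extractL w T = u ∧ a :: extractL w Tᶜ = v then 1 else 0) := by
    intro T
    rw [consSet_compl, extractL_cons, extractL_cons]
    simp
  simp only [lhs1, lhs2]
  congr 1
  · cases u with
    | nil => simp
    | cons b u' =>
      dsimp only
      by_cases hba : b = a
      · subst hba
        rw [Finset.card_filter, if_pos rfl]
        apply Finset.sum_congr rfl
        intro T _
        simp [List.cons.injEq, eq_comm]
      · rw [if_neg hba, Finset.sum_eq_zero]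
        intro T _
        simp only [List.cons.injEq, ite_eq_right_iff]
        rintro ⟨⟨h1, -⟩, -⟩
        exact absurd h1.symm hba
  · cases v with
    | nil => simp
    | cons c v' =>
      dsimp only
      by_cases hca : c = a
      · subst hca
        rw [Finset.card_filter, if_pos rfl]
        apply Finset.sum_congr rfl
        intro T _
        simp [List.cons.injEq, eq_comm]
      · rw [if_neg hca, Finset.sum_eq_zero]
        intro T _
        simp only [List.cons.injEq, ite_eq_right_iff]
        rintro ⟨-, h1, -⟩
        exact absurd h1.symm hca

lemma dcoeff_eq_shc {X : Type} [DecidableEq X] (w u v : List X) :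
    dcoeff w u v = shc w u v := by
  induction w generalizing u v with
  | nil => rw [dcoeff_nil]; rfl
  | cons a w ih =>
    rw [dcoeff_cons]
    show _ = shc (a :: w) u v
    unfold shc
    cases u <;> cases v <;> simp [ih]

section Part2

variable {X k : Type} [Fintype X] [DecidableEq X] [CommRing k]

set_option linter.unusedSectionVars false

lemma shc_nil_def (u v : List X) :
    shc ([] : List X) u v = if u = [] ∧ v = [] then 1 else 0 := rfl

lemma shc_cons_def (a : X) (w u v : List X) :
    shc (a :: w) u v =
      (match u with
        | b :: u' => if b = a then shc w u' v else 0
        | [] => 0)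
      + (match v with
        | c :: v' => if c = a then shc w u v' else 0
        | [] => 0) := rfl

lemma shc_length {w u v : List X} (h : u.length + v.length ≠ w.length) :
    shc w u v = 0 := by
  induction w generalizing u v with
  | nil =>
    rw [shc_nil_def, if_neg]
    rintro ⟨rfl, rfl⟩
    simp at h
  | cons a w ih =>
    rw [shc_cons_def]
    have h1 : (match u with
        | b :: u' => if b = a then shc w u' v else 0
        | [] => 0) = 0 := by
      cases u with
      | nil => rfl
      | cons b u' =>
        dsimp only
        rw [ih (by simp at h ⊢; omega), ite_self]
    have h2 : (match v with
        | c :: v' => if c = a then shc w u v' else 0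
        | [] => 0) = 0 := by
      cases v with
      | nil => rfl
      | cons c v' =>
        dsimp only
        rw [ih (by simp at h ⊢; omega), ite_self]
    rw [h1, h2]

lemma shc_nil_left (w v : List X) : shc w [] v = if w = v then 1 else 0 := by
  induction w generalizing v with
  | nil => rw [shc_nil_def]; cases v <;> simp
  | cons a w ih =>
    rw [shc_cons_def]
    cases v with
    | nil => simp
    | cons c v' =>
      dsimp only
      rw [ih, Nat.zero_add]
      by_cases h : c = a
      · subst h; simp [eq_comm]
      · rw [if_neg h]
        simp only [List.cons.injEq]
        rw [if_neg (fun hh : a = c ∧ w = v' => h hh.1.symm)]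

lemma shc_nil_right (w u : List X) : shc w u [] = if w = u then 1 else 0 := by
  induction w generalizing u with
  | nil => rw [shc_nil_def]; cases u <;> simp
  | cons a w ih =>
    rw [shc_cons_def]
    cases u with
    | nil => simp
    | cons b u' =>
      dsimp only
      rw [ih, Nat.add_zero]
      by_cases h : b = a
      · subst h; simp [eq_comm]
      · rw [if_neg h]
        simp only [List.cons.injEq]
        rw [if_neg (fun hh : a = b ∧ w = u' => h hh.1.symm)]

lemma Del_eq (F : Ser X k) (u v : List X) :
    Del F u v = ∑ w ∈ wordsLe X (u.length + v.length), F w * (shc w u v : k) := by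
  unfold Del
  refine Finset.sum_congr rfl fun w _ => ?_
  rw [dcoeff_eq_shc]

lemma Del_nil_left (F : Ser X k) (v : List X) : Del F [] v = F v := by
  rw [Del_eq]
  rw [Finset.sum_eq_single_of_mem v (mem_wordsLe.2 (by simp))]
  · rw [shc_nil_left, if_pos rfl]; simp
  · intro w _ hw
    rw [shc_nil_left, if_neg hw]; simp

lemma Del_nil_right (F : Ser X k) (u : List X) : Del F u [] = F u := by
  rw [Del_eq]
  rw [Finset.sum_eq_single_of_mem u (mem_wordsLe.2 (by simp))]
  · rw [shc_nil_right, if_pos rfl]; simp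
  · intro w _ hw
    rw [shc_nil_right, if_neg hw]; simp

lemma Del_add (F G : Ser X k) (u v : List X) :
    Del (fun w => F w + G w) u v = Del F u v + Del G u v := by
  simp [Del, add_mul, Finset.sum_add_distrib]

lemma Del_sub (F G : Ser X k) (u v : List X) :
    Del (fun w => F w - G w) u v = Del F u v - Del G u v := by
  simp [Del, sub_mul, Finset.sum_sub_distrib]

lemma Del_zero (u v : List X) : Del (fun _ => (0 : k)) u v = 0 := by
  simp [Del]

lemma Del_congr {F G : Ser X k} (h : ∀ w, F w = G w) (u v : List X) :
    Del F u v = Del G u v := by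
  simp only [Del, h]

lemma Del_sum {ι : Type*} (s : Finset ι) (F : ι → Ser X k) (u v : List X) :
    Del (fun w => ∑ i ∈ s, F i w) u v = ∑ i ∈ s, Del (F i) u v := by
  simp only [Del, Finset.sum_mul]
  rw [Finset.sum_comm]

lemma Del_smul (c : k) (F : Ser X k) (u v : List X) :
    Del (fun w => c * F w) u v = c * Del F u v := by
  simp only [Del, Finset.mul_sum, mul_assoc]

/-- Collapse of left multiplication by a monomial. -/
lemma smul2_monom_left (v : List X) (G : Ser X k) (u : List X) :
    smul2 (monom v) G u = if u.take v.length = v then G (u.drop v.length) else 0 := by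
  unfold smul2 monom
  by_cases hc : u.take v.length = v
  · have hlen : v.length ≤ u.length := by
      have := congrArg List.length hc
      rw [List.length_take] at this
      omega
    rw [if_pos hc, Finset.sum_eq_single_of_mem v.length
        (Finset.mem_range.2 (by omega))]
    · rw [if_pos hc, one_mul]
    · intro p hmem hp
      have hpr := Finset.mem_range.1 hmem
      rw [if_neg, zero_mul]
      intro h
      have := congrArg List.length h
      rw [List.length_take] at this
      omega
  · rw [if_neg hc, Finset.sum_eq_zero]
    intro p hp
    rw [if_neg, zero_mul]
    intro h
    have hplen := congrArg List.length h
    rw [List.length_take] at hplen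
    have : p = v.length := by
      simp at hp; omega
    exact hc (this ▸ h)

lemma smul2_monom_right (v : List X) (G : Ser X k) (u : List X) :
    smul2 G (monom v) u = if v.length ≤ u.length ∧ u.drop (u.length - v.length) = v
      then G (u.take (u.length - v.length)) else 0 := by
  unfold smul2 monom
  by_cases hc : v.length ≤ u.length ∧ u.drop (u.length - v.length) = v
  · rw [if_pos hc, Finset.sum_eq_single_of_mem (u.length - v.length)
        (Finset.mem_range.2 (by omega))]
    · rw [if_pos hc.2, mul_one]
    · intro p hp hpne
      rw [if_neg, mul_zero]
      intro h
      have := congrArg List.length h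
      simp at hp
      simp [List.length_drop] at this
      omega
  · rw [if_neg hc, Finset.sum_eq_zero]
    intro p hp
    rw [if_neg, mul_zero]
    intro h
    have hl := congrArg List.length h
    simp at hp
    simp [List.length_drop] at hl
    have hp' : p = u.length - v.length := by omega
    exact hc ⟨by omega, hp' ▸ h⟩

lemma smul2_monom_nil (G : Ser X k) (u : List X) : smul2 (monom []) G u = G u := by
  rw [smul2_monom_left]; simp

lemma smul2_monom_single (a : X) (G : Ser X k) (u : List X) :
    smul2 (monom [a]) G u =
      (match u with | b :: u' => if b = a then G u' else 0 | [] => 0) := by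
  rw [smul2_monom_left]
  cases u with
  | nil => simp
  | cons b u' =>
    simp only [List.length_cons, List.length_nil, List.take_succ_cons, List.take_zero,
      List.drop_succ_cons, List.drop_zero, List.cons.injEq, Nat.zero_add]
    by_cases h : b = a
    · simp [h]
    · simp [h]

lemma smul2_monom_cons (a : X) (t : List X) (H : Ser X k) (u : List X) :
    smul2 (monom (a :: t)) H u =
      (match u with | b :: u' => if b = a then smul2 (monom t) H u' else 0 | [] => 0) := by
  rw [smul2_monom_left]
  cases u with
  | nil => simp
  | cons b u' =>
    simp only [List.length_cons, List.take_succ_cons, List.drop_succ_cons, List.cons.injEq]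
    rw [smul2_monom_left]
    by_cases h : b = a
    · simp [h]
    · simp [h]

lemma smul2_add_right (P G H : Ser X k) (u : List X) :
    smul2 P (fun x => G x + H x) u = smul2 P G u + smul2 P H u := by
  simp [smul2, mul_add, Finset.sum_add_distrib]

lemma smul2_zero_right (P : Ser X k) (u : List X) :
    smul2 P (fun _ => (0 : k)) u = 0 := by
  simp [smul2]

lemma smul2_sum_right {ι : Type*} (s : Finset ι) (P : Ser X k) (H : ι → Ser X k)
    (u : List X) :
    smul2 P (fun x => ∑ i ∈ s, H i x) u = ∑ i ∈ s, smul2 P (H i) u := by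
  simp only [smul2, Finset.mul_sum]
  rw [Finset.sum_comm]

lemma smul2_smul_right (c : k) (P G : Ser X k) (u : List X) :
    smul2 P (fun x => c * G x) u = c * smul2 P G u := by
  simp only [smul2, Finset.mul_sum]
  refine Finset.sum_congr rfl fun p _ => by ring

lemma smul2_congr_right {P G H : Ser X k} (h : ∀ x, G x = H x) (u : List X) :
    smul2 P G u = smul2 P H u := by
  simp only [smul2, h]

end Part2

section Part3

variable {X k : Type} [Fintype X] [DecidableEq X] [CommRing k]

set_option linter.unusedSectionVars false

lemma Del_monom (w u v : List X) :
    Del (monom w : Ser X k) u v = (shc w u v : k) := by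
  rw [Del_eq]
  by_cases h : w.length ≤ u.length + v.length
  · rw [Finset.sum_eq_single_of_mem w (mem_wordsLe.2 h)]
    · simp [monom]
    · intro x _ hx
      simp [monom, hx]
  · rw [Finset.sum_eq_zero, shc_length (by omega), Nat.cast_zero]
    intro x hx
    have : x ≠ w := by
      intro hxw
      exact h (hxw ▸ mem_wordsLe.1 hx)
    simp [monom, this]

lemma sum_wordsLe_shrink {M L : ℕ} (hML : M ≤ L) (f : List X → k)
    (hf : ∀ w : List X, w.length ≤ L → ¬ w.length ≤ M → f w = 0) :
    ∑ w ∈ wordsLe X L, f w = ∑ w ∈ wordsLe X M, f w := by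
  refine (Finset.sum_subset (fun w hw => mem_wordsLe.2 ((mem_wordsLe.1 hw).trans hML))
    (fun w hw hnw => hf w (mem_wordsLe.1 hw) (fun hh => hnw (mem_wordsLe.2 hh)))).symm

lemma sigma_mk_eq {α : Type*} {β : α → Type*} {a c : α} {b : β a} {d : β c}
    (h1 : a = c) (h2 : HEq b d) : (⟨a, b⟩ : Sigma β) = ⟨c, d⟩ := by
  subst h1
  rw [eq_of_heq h2]

lemma sum_words_split (L : ℕ) (f : List X → List X → k) :
    ∑ w ∈ wordsLe X L, ∑ r ∈ Finset.range (w.length + 1), f (w.take r) (w.drop r)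
    = ∑ w1 ∈ wordsLe X L, ∑ w2 ∈ wordsLe X (L - w1.length), f w1 w2 := by
  rw [Finset.sum_sigma', Finset.sum_sigma']
  refine Finset.sum_nbij' (fun a => ⟨a.1.take a.2, a.1.drop a.2⟩)
    (fun b => ⟨b.1 ++ b.2, b.1.length⟩) ?_ ?_ ?_ ?_ ?_
  · rintro ⟨w, r⟩ hmem
    rw [Finset.mem_sigma] at hmem
    obtain ⟨hw, hr⟩ := hmem
    rw [mem_wordsLe] at hw
    rw [Finset.mem_range] at hr
    dsimp only at hw hr ⊢
    rw [Finset.mem_sigma, mem_wordsLe, mem_wordsLe]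
    constructor
    · rw [List.length_take]; omega
    · rw [List.length_drop, List.length_take]; omega
  · rintro ⟨w1, w2⟩ hmem
    rw [Finset.mem_sigma, mem_wordsLe, mem_wordsLe] at hmem
    obtain ⟨h1, h2⟩ := hmem
    dsimp only at h1 h2 ⊢
    rw [Finset.mem_sigma, mem_wordsLe, Finset.mem_range]
    dsimp only
    constructor
    · rw [List.length_append]; omega
    · rw [List.length_append]; omega
  · rintro ⟨w, r⟩ hmem
    rw [Finset.mem_sigma, mem_wordsLe, Finset.mem_range] at hmem
    obtain ⟨h1, h2⟩ := hmem
    dsimp only at h1 h2 ⊢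
    refine sigma_mk_eq (List.take_append_drop r w) (heq_of_eq ?_)
    rw [List.length_take]
    omega
  · rintro ⟨w1, w2⟩ _
    dsimp only
    refine sigma_mk_eq (by simp) (heq_of_eq (by simp))
  · rintro ⟨w, r⟩ _
    rfl

lemma shc_append (w1 w2 u v : List X) :
    shc (w1 ++ w2) u v =
      ∑ p ∈ Finset.range (u.length + 1), ∑ q ∈ Finset.range (v.length + 1),
        shc w1 (u.take p) (v.take q) * shc w2 (u.drop p) (v.drop q) := by
  induction w1 generalizing u v with
  | nil =>
    rw [List.nil_append]
    rw [Finset.sum_eq_single_of_mem 0 (Finset.mem_range.2 (by omega))]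
    · rw [Finset.sum_eq_single_of_mem 0 (Finset.mem_range.2 (by omega))]
      · simp [shc_nil_def]
      · intro q hq hq0
        have : v.take q ≠ [] := by
          intro hh
          have hlen := congrArg List.length hh
          rw [List.length_take] at hlen
          simp only [List.length_nil] at hlen
          rw [Finset.mem_range] at hq
          omega
        rw [shc_nil_def, if_neg (fun hh => this hh.2), zero_mul]
    · intro p hp hp0
      have : u.take p ≠ [] := by
        intro hh
        have hlen := congrArg List.length hh
        rw [List.length_take] at hlen
        simp only [List.length_nil] at hlen
        rw [Finset.mem_range] at hp
        omega
      rw [Finset.sum_eq_zero]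
      intro q _
      rw [shc_nil_def, if_neg (fun hh => this hh.1), zero_mul]
  | cons a w1 ih =>
    have expand : ∀ p q,
        shc (a :: w1) (u.take p) (v.take q) * shc w2 (u.drop p) (v.drop q)
        = (match u.take p with
            | b :: u'' => if b = a then shc w1 u'' (v.take q) else 0
            | [] => 0) * shc w2 (u.drop p) (v.drop q)
          + (match v.take q with
            | c :: v'' => if c = a then shc w1 (u.take p) v'' else 0
            | [] => 0) * shc w2 (u.drop p) (v.drop q) := by
      intro p q; rw [shc_cons_def, add_mul]
    simp only [expand, Finset.sum_add_distrib]
    rw [List.cons_append, shc_cons_def]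
    congr 1
    · cases u with
      | nil =>
        rw [Finset.sum_eq_zero]
        intro p _
        rw [Finset.sum_eq_zero]
        intro q _
        simp
      | cons b u' =>
        rw [Finset.sum_range_succ']
        have h0 : (∑ q ∈ Finset.range (v.length + 1),
            (match (b :: u').take 0 with
              | b'' :: u'' => if b'' = a then shc w1 u'' (v.take q) else 0
              | [] => 0) * shc w2 ((b :: u').drop 0) (v.drop q)) = 0 := by
          rw [Finset.sum_eq_zero]; intro q _; simp
        rw [h0, add_zero]
        simp only [List.take_succ_cons, List.drop_succ_cons]
        by_cases hba : b = a
        · simp only [if_pos hba, List.length_cons]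
          exact ih u' v
        · simp [hba]
    · cases v with
      | nil =>
        rw [Finset.sum_eq_zero]
        intro p _
        rw [Finset.sum_eq_zero]
        intro q _
        simp
      | cons c v' =>
        rw [Finset.sum_comm, Finset.sum_range_succ']
        have h0 : (∑ p ∈ Finset.range (u.length + 1),
            (match (c :: v').take 0 with
              | c'' :: v'' => if c'' = a then shc w1 (u.take p) v'' else 0
              | [] => 0) * shc w2 (u.drop p) ((c :: v').drop 0)) = 0 := by
          rw [Finset.sum_eq_zero]; intro p _; simp
        rw [h0, add_zero]
        simp only [List.take_succ_cons, List.drop_succ_cons]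
        by_cases hca : c = a
        · simp only [if_pos hca, List.length_cons]
          rw [Finset.sum_comm]
          exact ih u v'
        · simp [hca]

end Part3

section Part4

variable {X k : Type} [Fintype X] [DecidableEq X] [CommRing k]

set_option linter.unusedSectionVars false

lemma sum_comm3 {α β γ : Type*} (A : Finset α) (B : Finset β) (C : Finset γ)
    (f : α → β → γ → k) :
    ∑ a ∈ A, ∑ b ∈ B, ∑ c ∈ C, f a b c = ∑ b ∈ B, ∑ c ∈ C, ∑ a ∈ A, f a b c := by
  rw [Finset.sum_comm]
  exact Finset.sum_congr rfl fun b _ => Finset.sum_comm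

lemma Del_take_drop_key (F G : Ser X k) (u v : List X) (p q : ℕ)
    (hp : p ≤ u.length) (hq : q ≤ v.length) :
    Del F (u.take p) (v.take q) * Del G (u.drop p) (v.drop q)
    = ∑ w1 ∈ wordsLe X (u.length + v.length),
        ∑ w2 ∈ wordsLe X ((u.length + v.length) - w1.length),
          (F w1 * (shc w1 (u.take p) (v.take q) : k))
          * (G w2 * (shc w2 (u.drop p) (v.drop q) : k)) := by
  have htu : (u.take p).length = p := by rw [List.length_take]; omega
  have htv : (v.take q).length = q := by rw [List.length_take]; omega
  have hdu : (u.drop p).length = u.length - p := by rw [List.length_drop]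
  have hdv : (v.drop q).length = v.length - q := by rw [List.length_drop]
  rw [Del_eq, Del_eq, htu, htv, hdu, hdv, Finset.sum_mul_sum]
  symm
  calc
    ∑ w1 ∈ wordsLe X (u.length + v.length),
        ∑ w2 ∈ wordsLe X ((u.length + v.length) - w1.length),
          (F w1 * (shc w1 (u.take p) (v.take q) : k))
          * (G w2 * (shc w2 (u.drop p) (v.drop q) : k))
      = ∑ w1 ∈ wordsLe X (u.length + v.length),
        ∑ w2 ∈ wordsLe X ((u.length - p) + (v.length - q)),
          (F w1 * (shc w1 (u.take p) (v.take q) : k))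
          * (G w2 * (shc w2 (u.drop p) (v.drop q) : k)) := by
        refine Finset.sum_congr rfl fun w1 _ => ?_
        by_cases hw1 : w1.length = p + q
        · have : (u.length + v.length) - w1.length = (u.length - p) + (v.length - q) := by
            omega
          rw [this]
        · have hz : shc w1 (u.take p) (v.take q) = 0 := by
            apply shc_length
            rw [htu, htv]
            omega
          rw [Finset.sum_eq_zero, Finset.sum_eq_zero]
          · intro w2 _; rw [hz, Nat.cast_zero, mul_zero, zero_mul]
          · intro w2 _; rw [hz, Nat.cast_zero, mul_zero, zero_mul]
    _ = ∑ w1 ∈ wordsLe X (p + q),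
        ∑ w2 ∈ wordsLe X ((u.length - p) + (v.length - q)),
          (F w1 * (shc w1 (u.take p) (v.take q) : k))
          * (G w2 * (shc w2 (u.drop p) (v.drop q) : k)) := by
        refine sum_wordsLe_shrink (by omega) _ fun w1 _ hlong => ?_
        have hz : shc w1 (u.take p) (v.take q) = 0 := by
          apply shc_length
          rw [htu, htv]
          omega
        rw [Finset.sum_eq_zero]
        intro w2 _; rw [hz, Nat.cast_zero, mul_zero, zero_mul]

lemma Del_mul (F G : Ser X k) (u v : List X) :
    Del (smul2 F G) u v
    = ∑ p ∈ Finset.range (u.length + 1), ∑ q ∈ Finset.range (v.length + 1),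
        Del F (u.take p) (v.take q) * Del G (u.drop p) (v.drop q) := by
  rw [Del_eq]
  have step1 : ∀ w ∈ wordsLe X (u.length + v.length), smul2 F G w * (shc w u v : k)
      = ∑ r ∈ Finset.range (w.length + 1),
          F (w.take r) * G (w.drop r) * (shc (w.take r ++ w.drop r) u v : k) := by
    intro w _
    rw [smul2, Finset.sum_mul]
    refine Finset.sum_congr rfl fun r _ => ?_
    rw [List.take_append_drop]
  rw [Finset.sum_congr rfl step1,
    sum_words_split (u.length + v.length) (fun w1 w2 => F w1 * G w2 * (shc (w1 ++ w2) u v : k))]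
  have step2 : ∀ w1 w2 : List X, F w1 * G w2 * (shc (w1 ++ w2) u v : k)
      = ∑ p ∈ Finset.range (u.length + 1), ∑ q ∈ Finset.range (v.length + 1),
          (F w1 * (shc w1 (u.take p) (v.take q) : k))
          * (G w2 * (shc w2 (u.drop p) (v.drop q) : k)) := by
    intro w1 w2
    rw [shc_append, Nat.cast_sum, Finset.mul_sum]
    refine Finset.sum_congr rfl fun p _ => ?_
    rw [Nat.cast_sum, Finset.mul_sum]
    refine Finset.sum_congr rfl fun q _ => ?_
    push_cast
    ring
  simp only [step2]
  have rhs : ∀ p ∈ Finset.range (u.length + 1), ∀ q ∈ Finset.range (v.length + 1),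
      Del F (u.take p) (v.take q) * Del G (u.drop p) (v.drop q)
      = ∑ w1 ∈ wordsLe X (u.length + v.length),
          ∑ w2 ∈ wordsLe X ((u.length + v.length) - w1.length),
            (F w1 * (shc w1 (u.take p) (v.take q) : k))
            * (G w2 * (shc w2 (u.drop p) (v.drop q) : k)) := by
    intro p hp q hq
    rw [Finset.mem_range] at hp hq
    exact Del_take_drop_key F G u v p q (by omega) (by omega)
  rw [Finset.sum_congr rfl (fun p hp => Finset.sum_congr rfl (fun q hq => rhs p hp q hq))]
  have swap_inner : ∀ w1 ∈ wordsLe X (u.length + v.length),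
      (∑ w2 ∈ wordsLe X ((u.length + v.length) - w1.length),
        ∑ p ∈ Finset.range (u.length + 1), ∑ q ∈ Finset.range (v.length + 1),
          (F w1 * (shc w1 (u.take p) (v.take q) : k))
          * (G w2 * (shc w2 (u.drop p) (v.drop q) : k)))
      = ∑ p ∈ Finset.range (u.length + 1), ∑ q ∈ Finset.range (v.length + 1),
          ∑ w2 ∈ wordsLe X ((u.length + v.length) - w1.length),
            (F w1 * (shc w1 (u.take p) (v.take q) : k))
            * (G w2 * (shc w2 (u.drop p) (v.drop q) : k)) :=
    fun w1 _ => sum_comm3 _ _ _ _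
  rw [Finset.sum_congr rfl swap_inner]
  exact sum_comm3 _ _ _ _

/-- The component form of "P is primitive". -/
def PrimId (P : Ser X k) : Prop :=
  ∀ u v, Del P u v = (if v = [] then P u else 0) + (if u = [] then P v else 0)

lemma primId_nil {P : Ser X k} (h : PrimId P) : P [] = 0 := by
  have h2 := h [] []
  rw [Del_nil_left] at h2
  simp only [if_pos rfl] at h2
  have h3 : P [] + 0 = P [] + P [] := by rw [add_zero]; exact h2
  exact (add_left_cancel h3).symm

lemma prim_mul_left {P : Ser X k} (hP : PrimId P) (Q : Ser X k) (u v : List X) :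
    Del (smul2 P Q) u v
      = smul2 P (fun x => Del Q x v) u + smul2 P (fun y => Del Q u y) v := by
  rw [Del_mul]
  have expand : ∀ p q, Del P (u.take p) (v.take q) * Del Q (u.drop p) (v.drop q)
      = (if v.take q = [] then P (u.take p) else 0) * Del Q (u.drop p) (v.drop q)
        + (if u.take p = [] then P (v.take q) else 0) * Del Q (u.drop p) (v.drop q) := by
    intro p q
    rw [hP, add_mul]
  simp only [expand, Finset.sum_add_distrib]
  congr 1
  · -- only q = 0 contributes; gives smul2 P (fun x => Del Q x v) u
    have inner : ∀ p ∈ Finset.range (u.length + 1),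
        (∑ q ∈ Finset.range (v.length + 1),
          (if v.take q = [] then P (u.take p) else 0) * Del Q (u.drop p) (v.drop q))
        = P (u.take p) * Del Q (u.drop p) v := by
      intro p _
      rw [Finset.sum_eq_single_of_mem 0 (Finset.mem_range.2 (by omega))]
      · rw [List.take_zero, if_pos rfl, List.drop_zero]
      · intro q hq hq0
        rw [Finset.mem_range] at hq
        rw [if_neg, zero_mul]
        intro hh
        have := congrArg List.length hh
        rw [List.length_take] at this
        simp only [List.length_nil] at this
        omega
    rw [Finset.sum_congr rfl inner]
    rfl
  · -- only p = 0 contributes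
    rw [Finset.sum_eq_single_of_mem 0 (Finset.mem_range.2 (by omega))]
    · rw [List.take_zero, List.drop_zero]
      simp only [if_pos rfl]
      rfl
    · intro p hp hp0
      rw [Finset.mem_range] at hp
      rw [Finset.sum_eq_zero]
      intro q _
      rw [if_neg, zero_mul]
      intro hh
      have := congrArg List.length hh
      rw [List.length_take] at this
      simp only [List.length_nil] at this
      omega

lemma prim_mul_both {P Q : Ser X k} (hP : PrimId P) (hQ : PrimId Q) (u v : List X) :
    Del (smul2 P Q) u v
      = ((if v = [] then smul2 P Q u else 0) + (if u = [] then smul2 P Q v else 0))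
        + (P u * Q v + P v * Q u) := by
  rw [prim_mul_left hP]
  have e1 : smul2 P (fun x => Del Q x v) u
      = (if v = [] then smul2 P Q u else 0) + P u * Q v := by
    have : ∀ x, Del Q x v = (if v = [] then Q x else 0) + (if x = [] then Q v else 0) :=
      fun x => hQ x v
    rw [smul2_congr_right this, smul2_add_right]
    congr 1
    · by_cases hv : v = []
      · simp only [if_pos hv]
      · simp only [if_neg hv, smul2_zero_right]
    · unfold smul2
      rw [Finset.sum_eq_single_of_mem u.length (Finset.mem_range.2 (by omega))]
      · rw [List.take_length, List.drop_length]
        dsimp only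
        rw [if_pos rfl]
      · intro p hp hp0
        rw [Finset.mem_range] at hp
        dsimp only
        rw [if_neg, mul_zero]
        intro hh
        have := congrArg List.length hh
        rw [List.length_drop] at this
        simp only [List.length_nil] at this
        omega
  have e2 : smul2 P (fun y => Del Q u y) v
      = (if u = [] then smul2 P Q v else 0) + P v * Q u := by
    have : ∀ y, Del Q u y = (if y = [] then Q u else 0) + (if u = [] then Q y else 0) :=
      fun y => hQ u y
    rw [smul2_congr_right this, smul2_add_right]
    rw [add_comm]
    congr 1
    · by_cases hu : u = []
      · simp only [if_pos hu]
      · simp only [if_neg hu, smul2_zero_right]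
    · unfold smul2
      rw [Finset.sum_eq_single_of_mem v.length (Finset.mem_range.2 (by omega))]
      · rw [List.take_length, List.drop_length]
        dsimp only
        rw [if_pos rfl]
      · intro p hp hp0
        rw [Finset.mem_range] at hp
        dsimp only
        rw [if_neg, mul_zero]
        intro hh
        have := congrArg List.length hh
        rw [List.length_drop] at this
        simp only [List.length_nil] at this
        omega
  rw [e1, e2]
  ring

lemma prim_commutator {P Q : Ser X k} (hP : PrimId P) (hQ : PrimId Q) :
    PrimId (fun w => smul2 P Q w - smul2 Q P w) := by
  intro u v
  rw [Del_sub, prim_mul_both hP hQ, prim_mul_both hQ hP]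
  by_cases hu : u = [] <;> by_cases hv : v = [] <;> simp only [hu, hv, if_pos, if_neg,
    if_true, if_false] <;> ring_nf <;> simp [hu, hv] <;> ring

end Part4

section Part5

variable {X k : Type} [Fintype X] [DecidableEq X] [CommRing k]

set_option linter.unusedSectionVars false

lemma smul2_nil (F G : Ser X k) : smul2 F G [] = F [] * G [] := by
  simp [smul2]

lemma shc_map {Y : Type} [Fintype Y] [DecidableEq Y] (f : X → Y) (hf : Function.Injective f)
    (w u v : List X) : shc (w.map f) (u.map f) (v.map f) = shc w u v := by
  induction w generalizing u v with
  | nil =>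
    rw [List.map_nil, shc_nil_def, shc_nil_def]
    simp [List.map_eq_nil_iff]
  | cons a w ih =>
    rw [List.map_cons, shc_cons_def, shc_cons_def]
    congr 1
    · cases u with
      | nil => rfl
      | cons b u' =>
        simp only [List.map_cons]
        by_cases h : b = a
        · rw [if_pos (congrArg f h), if_pos h, ih]
        · rw [if_neg (fun hh => h (hf hh)), if_neg h]
    · cases v with
      | nil => rfl
      | cons c v' =>
        simp only [List.map_cons]
        by_cases h : c = a
        · rw [if_pos (congrArg f h), if_pos h, ih]
        · rw [if_neg (fun hh => h (hf hh)), if_neg h]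

lemma sum_words_cons_support {n : ℕ} (h : List X → k) (a : X) (h0 : h [] = 0)
    (hne : ∀ (b : X) (w' : List X), b ≠ a → h (b :: w') = 0) :
    ∑ w ∈ wordsLe X (n + 1), h w = ∑ w' ∈ wordsLe X n, h (a :: w') := by
  have emb : Function.Injective (fun w' : List X => a :: w') := by
    intro x y hxy
    injection hxy
  calc ∑ w ∈ wordsLe X (n + 1), h w
      = ∑ w ∈ (wordsLe X n).map ⟨fun w' => a :: w', emb⟩, h w := (Finset.sum_subset ?_ ?_).symm
    _ = ∑ w' ∈ wordsLe X n, h (a :: w') := Finset.sum_map _ _ _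
  · intro w hw
    rw [Finset.mem_map] at hw
    obtain ⟨w', hw', rfl⟩ := hw
    rw [mem_wordsLe] at hw' ⊢
    simp only [Function.Embedding.coeFn_mk, List.length_cons]
    omega
  · intro w hw hnw
    cases w with
    | nil => exact h0
    | cons b w' =>
      by_cases hb : b = a
      · subst hb
        exfalso
        apply hnw
        rw [Finset.mem_map]
        refine ⟨w', ?_, rfl⟩
        rw [mem_wordsLe] at hw ⊢
        simp only [Function.Embedding.coeFn_mk, List.length_cons] at hw
        omega
      · exact hne b w' hb

lemma sum_G_smul2_monom (D G : Ser X k) (u : List X) (n1 : ℕ) (hu : u.length = n1 + 1) :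
    ∑ w' ∈ wordsLe X n1, G w' * smul2 D (monom w') u
      = ∑ p' ∈ Finset.range (n1 + 1), D (u.take (p' + 1)) * G (u.drop (p' + 1)) := by
  have key : ∀ w' ∈ wordsLe X n1, G w' * smul2 D (monom w') u
      = if u.drop (u.length - w'.length) = w'
          then D (u.take (u.length - w'.length)) * G w' else 0 := by
    intro w' hw'
    rw [smul2_monom_right]
    have hlen : w'.length ≤ u.length := by
      have := mem_wordsLe.1 hw'
      omega
    by_cases hcond : u.drop (u.length - w'.length) = w'
    · rw [if_pos ⟨hlen, hcond⟩, if_pos hcond]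
      ring
    · rw [if_neg (fun hh => hcond hh.2), if_neg hcond, mul_zero]
  rw [Finset.sum_congr rfl key, ← Finset.sum_filter]
  refine Finset.sum_nbij' (fun w' => u.length - w'.length - 1) (fun p' => u.drop (p' + 1))
    ?_ ?_ ?_ ?_ ?_
  · intro w' hw'
    rw [Finset.mem_filter, mem_wordsLe] at hw'
    try dsimp only
    rw [Finset.mem_range]
    omega
  · intro p' hp'
    rw [Finset.mem_range] at hp'
    try dsimp only
    rw [Finset.mem_filter, mem_wordsLe, List.length_drop]
    constructor
    · omega
    · congr 1
      omega
  · intro w' hw'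
    rw [Finset.mem_filter, mem_wordsLe] at hw'
    have harg : u.length - w'.length - 1 + 1 = u.length - w'.length := by omega
    try dsimp only
    rw [harg]
    exact hw'.2
  · intro p' hp'
    rw [Finset.mem_range] at hp'
    try dsimp only
    rw [List.length_drop]
    omega
  · intro w' hw'
    rw [Finset.mem_filter, mem_wordsLe] at hw'
    have harg : u.length - w'.length - 1 + 1 = u.length - w'.length := by omega
    try dsimp only
    rw [harg, hw'.2]

end Part5

section Part6a

variable {X k : Type} [Fintype X] [DecidableEq X] [CommRing k]

set_option linter.unusedSectionVars false

lemma smul2_one_letter (F G : Ser X k) (b : X) :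
    smul2 F G [b] = F [] * G [b] + F [b] * G [] := by
  show ∑ p ∈ Finset.range 2, _ = _
  rw [Finset.sum_range_succ, Finset.sum_range_one]
  rfl

lemma smul2_monom_cons' (a : X) (t : List X) (H : Ser X k) (u : List X) :
    smul2 (monom (a :: t)) H u = smul2 (monom [a]) (fun x => smul2 (monom t) H x) u := by
  rw [smul2_monom_cons, smul2_monom_single]

def headIf {X : Type} [DecidableEq X] {M : Type} [Zero M] (a : X) (g : List X → M) :
    List X → M
  | [] => 0
  | b :: t => if b = a then g t else 0

lemma smul2_monom_single' (a : X) (G : Ser X k) (u : List X) :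
    smul2 (monom [a]) G u = headIf a G u := by
  rw [smul2_monom_single]
  cases u <;> rfl

lemma shc_single_eq (a : X) (u v : List X) :
    shc [a] u v
      = (if u = [a] ∧ v = [] then 1 else 0) + (if u = [] ∧ v = [a] then 1 else 0) := by
  rcases u with _ | ⟨b, u'⟩ <;> rcases v with _ | ⟨c, v'⟩ <;>
      simp only [shc_cons_def, shc_nil_def, List.cons.injEq] <;>
    split_ifs <;> simp_all

lemma primId_monom_single (a : X) : PrimId (monom [a] : Ser X k) := by
  intro u v
  rw [Del_monom, shc_single_eq]
  push_cast
  simp only [monom]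
  split_ifs <;> simp_all

end Part6a

section Part6b

variable {Γ k : Type} [CommGroup Γ] [Fintype Γ] [DecidableEq Γ] [CommRing k]

set_option linter.unusedSectionVars false

variable (ψ : Ser (Option Γ) k)

lemma tser_Del (σ : Γ) (u v : List (Option Γ)) :
    Del (tser σ ψ) u v
      = Del ψ (u.map (Option.map (fun τ => σ⁻¹ * τ)))
          (v.map (Option.map (fun τ => σ⁻¹ * τ))) := by
  set f : Option Γ → Option Γ := Option.map (fun τ => σ⁻¹ * τ) with hf
  set g : Option Γ → Option Γ := Option.map (fun τ => σ * τ) with hg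
  have hgf : ∀ x, g (f x) = x := by
    intro x; cases x <;> simp [hf, hg, mul_inv_cancel_left]
  have hfg : ∀ x, f (g x) = x := by
    intro x; cases x <;> simp [hf, hg, inv_mul_cancel_left]
  have hinj : Function.Injective f := fun x y hxy => by rw [← hgf x, hxy, hgf]
  have hcfg : f ∘ g = id := funext hfg
  have hcgf : g ∘ f = id := funext hgf
  have hlg : ∀ l : List (Option Γ), (l.map g).map f = l := by
    intro l; rw [List.map_map, hcfg, List.map_id]
  have hlf : ∀ l : List (Option Γ), (l.map f).map g = l := by
    intro l; rw [List.map_map, hcgf, List.map_id]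
  rw [Del_eq, Del_eq, List.length_map, List.length_map]
  refine Finset.sum_nbij' (fun w => w.map f) (fun w => w.map g) ?_ ?_ ?_ ?_ ?_
  · intro w hw
    rw [mem_wordsLe] at hw ⊢
    rw [List.length_map]
    exact hw
  · intro w hw
    rw [mem_wordsLe] at hw ⊢
    rw [List.length_map]
    exact hw
  · intro w _
    exact hlf w
  · intro w _
    exact hlg w
  · intro w _
    show tser σ ψ w * _ = ψ (w.map f) * _
    rw [show tser σ ψ w = ψ (w.map f) from rfl, shc_map f hinj]

lemma tser_primId (hψ : PrimId ψ) (σ : Γ) : PrimId (tser σ ψ) := by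
  intro u v
  rw [tser_Del, hψ]
  simp only [List.map_eq_nil_iff]
  rfl

lemma dlet_primId (hψ : PrimId ψ) (x : Option Γ) : PrimId (dlet ψ x) := by
  cases x with
  | none =>
    intro u v
    rw [show dlet ψ none = (fun _ => (0 : k)) from rfl, Del_zero]
    simp
  | some σ =>
    exact prim_commutator (primId_monom_single (some σ)) (tser_primId ψ hψ σ)

lemma tser_nil (σ : Γ) : tser σ ψ [] = ψ [] := rfl

lemma dlet_short (hψ0 : ψ [] = 0) (x : Option Γ) (z : List (Option Γ))
    (hz : z.length ≤ 1) : dlet ψ x z = 0 := by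
  cases x with
  | none => rfl
  | some σ =>
    show smul2 (monom [some σ]) (tser σ ψ) z - smul2 (tser σ ψ) (monom [some σ]) z = 0
    cases z with
    | nil =>
      rw [smul2_nil, smul2_nil, tser_nil, hψ0]
      simp [monom]
    | cons b z' =>
      have hz' : z' = [] := by
        rw [List.length_cons] at hz
        exact List.eq_nil_of_length_eq_zero (by omega)
      subst hz'
      rw [smul2_one_letter, smul2_one_letter, tser_nil, hψ0]
      simp [monom]

lemma dword_nil (u : List (Option Γ)) : dword ψ [] u = 0 := by
  simp [dword]

lemma dword_cons (a : Option Γ) (w : List (Option Γ)) (u : List (Option Γ)) :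
    dword ψ (a :: w) u
      = smul2 (dlet ψ a) (monom w) u + smul2 (monom [a]) (dword ψ w) u := by
  show (∑ i ∈ Finset.range (a :: w).length, _) = _
  simp only [List.length_cons]
  rw [Finset.sum_range_succ']
  have hf0 : smul2 (monom ((a :: w).take 0))
      (smul2 (dlet ψ ((a :: w).getD 0 none)) (monom ((a :: w).drop (0 + 1)))) u
      = smul2 (dlet ψ a) (monom w) u := by
    rw [List.take_zero, List.getD_cons_zero, show (a :: w).drop (0 + 1) = w from rfl]
    rw [smul2_monom_nil]
  have hfi : ∀ i, smul2 (monom ((a :: w).take (i + 1)))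
      (smul2 (dlet ψ ((a :: w).getD (i + 1) none)) (monom ((a :: w).drop (i + 1 + 1)))) u
      = smul2 (monom [a]) (fun x =>
          smul2 (monom (w.take i)) (smul2 (dlet ψ (w.getD i none)) (monom (w.drop (i + 1)))) x) u := by
    intro i
    rw [List.take_succ_cons, List.getD_cons_succ, List.drop_succ_cons, smul2_monom_cons']
  rw [Finset.sum_congr rfl (fun i _ => hfi i), hf0, ← smul2_sum_right]
  rw [add_comm]
  rfl

lemma dword_short (hψ0 : ψ [] = 0) (w u : List (Option Γ)) (h : u.length ≤ w.length) :
    dword ψ w u = 0 := by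
  apply Finset.sum_eq_zero
  intro i hi
  rw [Finset.mem_range] at hi
  rw [smul2_monom_left]
  by_cases h1 : u.take (w.take i).length = w.take i
  · rw [if_pos h1, smul2_monom_right]
    by_cases h2 : (w.drop (i + 1)).length ≤ (u.drop (w.take i).length).length ∧
        (u.drop (w.take i).length).drop
          ((u.drop (w.take i).length).length - (w.drop (i + 1)).length) = w.drop (i + 1)
    · rw [if_pos h2]
      apply dlet_short ψ hψ0
      rw [List.length_take, List.length_drop, List.length_take, List.length_drop]
      omega
    · rw [if_neg h2]
  · rw [if_neg h1]

lemma dser_congr {F G : Ser (Option Γ) k} (h : ∀ w, F w = G w) (u : List (Option Γ)) :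
    dser ψ F u = dser ψ G u := by
  simp only [dser, h]

lemma dser_add (F G : Ser (Option Γ) k) (u : List (Option Γ)) :
    dser ψ (fun w => F w + G w) u = dser ψ F u + dser ψ G u := by
  simp [dser, add_mul, Finset.sum_add_distrib]

lemma dser_smul (c : k) (F : Ser (Option Γ) k) (u : List (Option Γ)) :
    dser ψ (fun w => c * F w) u = c * dser ψ F u := by
  simp [dser, Finset.mul_sum, mul_assoc]

lemma dser_zero (u : List (Option Γ)) : dser ψ (fun _ => (0 : k)) u = 0 := by
  simp [dser]

lemma dser_monom_mul (hψ0 : ψ [] = 0) (a : Option Γ) (G : Ser (Option Γ) k)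
    (u : List (Option Γ)) :
    dser ψ (fun w => smul2 (monom [a]) G w) u
      = smul2 (dlet ψ a) G u + smul2 (monom [a]) (dser ψ G) u := by
  cases u with
  | nil =>
    have hL : dser ψ (fun w => smul2 (monom [a]) G w) [] = 0 := by
      apply Finset.sum_eq_zero
      intro w hw
      have : w = [] := List.eq_nil_of_length_eq_zero
        (Nat.le_zero.1 (mem_wordsLe.1 hw))
      subst this
      rw [dword_nil, mul_zero]
    rw [hL, smul2_nil, dlet_short ψ hψ0 a [] (by simp), zero_mul,
      smul2_monom_single]
    simp
  | cons y u' =>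
    have hstep : dser ψ (fun w => smul2 (monom [a]) G w) (y :: u')
        = ∑ w' ∈ wordsLe (Option Γ) u'.length,
            G w' * dword ψ (a :: w') (y :: u') := by
      show (∑ w ∈ wordsLe (Option Γ) (y :: u').length, _) = _
      simp only [List.length_cons]
      rw [sum_words_cons_support
        (fun w => smul2 (monom [a]) G w * dword ψ w (y :: u')) a
        (by simp [smul2_monom_single])
        (fun b w' hb => by simp [smul2_monom_single, hb])]
      refine Finset.sum_congr rfl fun w' _ => ?_
      simp [smul2_monom_single]
    rw [hstep]
    have hsplit : ∀ w' ∈ wordsLe (Option Γ) u'.length,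
        G w' * dword ψ (a :: w') (y :: u')
        = G w' * smul2 (dlet ψ a) (monom w') (y :: u')
          + G w' * smul2 (monom [a]) (dword ψ w') (y :: u') := by
      intro w' _
      rw [dword_cons, mul_add]
    rw [Finset.sum_congr rfl hsplit, Finset.sum_add_distrib]
    congr 1
    · -- term A
      rw [sum_G_smul2_monom (dlet ψ a) G (y :: u') u'.length (by simp)]
      rw [smul2]
      simp only [List.length_cons]
      conv_rhs => rw [Finset.sum_range_succ']
      rw [List.take_zero, dlet_short ψ hψ0 a [] (by simp), zero_mul, add_zero]
    · -- term B
      have hcoll : ∀ w' ∈ wordsLe (Option Γ) u'.length,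
          G w' * smul2 (monom [a]) (dword ψ w') (y :: u')
          = G w' * (if y = a then dword ψ w' u' else 0) := by
        intro w' _
        rw [smul2_monom_single]
      rw [Finset.sum_congr rfl hcoll, smul2_monom_single]
      by_cases hy : y = a
      · simp only [if_pos hy]
        rfl
      · simp [hy]

end Part6b

section Part7

variable {Γ k : Type} [CommGroup Γ] [Fintype Γ] [DecidableEq Γ] [CommRing k]
variable (ψ : Ser (Option Γ) k)

set_option linter.unusedSectionVars false

lemma dword_coderiv (hψ0 : ψ [] = 0) (hψ : PrimId ψ) (w u v : List (Option Γ)) :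
    Del (dword ψ w) u v
      = dser ψ (fun x => (shc w x v : k)) u + dser ψ (fun y => (shc w u y : k)) v := by
  induction w generalizing u v with
  | nil =>
    rw [Del_congr (fun z => dword_nil ψ z) u v, Del_zero]
    have hz : ∀ (z : List (Option Γ)) (t : List (Option Γ)),
        dser ψ (fun x => (shc [] x t : k)) z = 0 := by
      intro z t
      apply Finset.sum_eq_zero
      intro w' _
      cases w' with
      | nil => rw [dword_nil, mul_zero]
      | cons b w'' =>
        show (shc [] (b :: w'') t : k) * dword ψ (b :: w'') z = 0
        rw [shc_nil_def, if_neg (fun hh => List.cons_ne_nil b w'' hh.1)]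
        rw [Nat.cast_zero, zero_mul]
    have hz2 : ∀ (z : List (Option Γ)) (t : List (Option Γ)),
        dser ψ (fun y => (shc [] t y : k)) z = 0 := by
      intro z t
      apply Finset.sum_eq_zero
      intro w' _
      cases w' with
      | nil => rw [dword_nil, mul_zero]
      | cons b w'' =>
        show (shc [] t (b :: w'') : k) * dword ψ (b :: w'') z = 0
        rw [shc_nil_def, if_neg (fun hh => List.cons_ne_nil b w'' hh.2)]
        rw [Nat.cast_zero, zero_mul]
    rw [hz, hz2, add_zero]
  | cons a w ih =>
    have claimL : Del (dword ψ (a :: w)) u v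
        = (smul2 (dlet ψ a) (fun x => (shc w x v : k)) u
            + smul2 (dlet ψ a) (fun y => (shc w u y : k)) v)
          + ((smul2 (monom [a]) (dser ψ (fun x => (shc w x v : k))) u
              + headIf a (fun u' => dser ψ (fun z => (shc w u' z : k)) v) u)
            + (smul2 (monom [a]) (dser ψ (fun y => (shc w u y : k))) v
              + headIf a (fun v' => dser ψ (fun z => (shc w z v' : k)) u) v)) := by
      rw [Del_congr (fun z => dword_cons ψ a w z) u v, Del_add]
      have t1 : Del (smul2 (dlet ψ a) (monom w)) u v
          = smul2 (dlet ψ a) (fun x => (shc w x v : k)) u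
            + smul2 (dlet ψ a) (fun y => (shc w u y : k)) v := by
        rw [prim_mul_left (dlet_primId ψ hψ a) (monom w)]
        congr 1
        · exact smul2_congr_right (fun x => Del_monom w x v) u
        · exact smul2_congr_right (fun y => Del_monom w u y) v
      have t2 : Del (smul2 (monom [a]) (dword ψ w)) u v
          = (smul2 (monom [a]) (dser ψ (fun x => (shc w x v : k))) u
              + headIf a (fun u' => dser ψ (fun z => (shc w u' z : k)) v) u)
            + (smul2 (monom [a]) (dser ψ (fun y => (shc w u y : k))) v
              + headIf a (fun v' => dser ψ (fun z => (shc w z v' : k)) u) v) := by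
        rw [prim_mul_left (primId_monom_single a) (dword ψ w)]
        congr 1
        · rw [smul2_congr_right (fun x => ih x v) u, smul2_add_right]
          congr 1
          rw [smul2_monom_single']
        · rw [smul2_congr_right (fun y => ih u y) v, smul2_add_right, add_comm]
          congr 1
          rw [smul2_monom_single']
      rw [t1, t2]
    have claimR1 : dser ψ (fun x => (shc (a :: w) x v : k)) u
        = (smul2 (dlet ψ a) (fun x => (shc w x v : k)) u
            + smul2 (monom [a]) (dser ψ (fun x => (shc w x v : k))) u)
          + headIf a (fun v' => dser ψ (fun z => (shc w z v' : k)) u) v := by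
      have hfun : ∀ x, (shc (a :: w) x v : k)
          = smul2 (monom [a]) (fun x' => (shc w x' v : k)) x
            + headIf a (fun v' => (shc w x v' : k)) v := by
        intro x
        rw [shc_cons_def, Nat.cast_add]
        congr 1
        · rw [smul2_monom_single']
          cases x with
          | nil => simp [headIf]
          | cons b x' =>
            by_cases hb : b = a <;> simp [hb, headIf]
        · cases v with
          | nil => simp [headIf]
          | cons c v' =>
            by_cases hc : c = a <;> simp [hc, headIf]
      rw [dser_congr ψ hfun, dser_add]
      congr 1
      · exact dser_monom_mul ψ hψ0 a _ u
      · cases v with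
        | nil => exact dser_zero ψ u
        | cons c v' =>
          show dser ψ (fun x => if c = a then ((shc w x v' : ℕ) : k) else 0) u = _
          by_cases hc : c = a
          · simp only [headIf, if_pos hc]
          · simp only [headIf, if_neg hc]
            exact dser_zero ψ u
    have claimR2 : dser ψ (fun y => (shc (a :: w) u y : k)) v
        = (smul2 (dlet ψ a) (fun y => (shc w u y : k)) v
            + smul2 (monom [a]) (dser ψ (fun y => (shc w u y : k))) v)
          + headIf a (fun u' => dser ψ (fun z => (shc w u' z : k)) v) u := by
      have hfun : ∀ y, (shc (a :: w) u y : k)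
          = smul2 (monom [a]) (fun y' => (shc w u y' : k)) y
            + headIf a (fun u' => (shc w u' y : k)) u := by
        intro y
        rw [shc_cons_def, Nat.cast_add, add_comm]
        congr 1
        · rw [smul2_monom_single']
          cases y with
          | nil => simp [headIf]
          | cons c y' =>
            by_cases hc : c = a <;> simp [hc, headIf]
        · cases u with
          | nil => simp [headIf]
          | cons b u' =>
            by_cases hb : b = a <;> simp [hb, headIf]
      rw [dser_congr ψ hfun, dser_add]
      congr 1
      · exact dser_monom_mul ψ hψ0 a _ v
      · cases u with
        | nil => exact dser_zero ψ v
        | cons b u' =>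
          show dser ψ (fun y => if b = a then ((shc w u' y : ℕ) : k) else 0) v = _
          by_cases hb : b = a
          · simp only [headIf, if_pos hb]
          · simp only [headIf, if_neg hb]
            exact dser_zero ψ v
    rw [claimL, claimR1, claimR2]
    ring

lemma dser_coderiv (hψ0 : ψ [] = 0) (hψ : PrimId ψ) (F : Ser (Option Γ) k)
    (u v : List (Option Γ)) :
    Del (dser ψ F) u v
      = dser ψ (fun x => Del F x v) u + dser ψ (fun y => Del F u y) v := by
  set L := u.length + v.length with hL
  -- LHS
  have lhs1 : Del (dser ψ F) u v
      = ∑ w ∈ wordsLe (Option Γ) L, F w * Del (dword ψ w) u v := by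
    rw [Del_eq]
    have hinner : ∀ w' ∈ wordsLe (Option Γ) L, dser ψ F w' * (shc w' u v : k)
        = ∑ w ∈ wordsLe (Option Γ) L, F w * dword ψ w w' * (shc w' u v : k) := by
      intro w' hw'
      rw [show dser ψ F w' = ∑ w ∈ wordsLe (Option Γ) L, F w * dword ψ w w' from ?_,
        Finset.sum_mul]
      refine Finset.sum_subset ?_ ?_
      · intro w hw
        rw [mem_wordsLe] at hw ⊢
        have := mem_wordsLe.1 hw'
        omega
      · intro w hw hnw
        rw [mem_wordsLe] at hw
        rw [dword_short ψ hψ0 w w' ?_, mul_zero]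
        rw [mem_wordsLe] at hnw
        omega
    rw [Finset.sum_congr rfl hinner, Finset.sum_comm]
    refine Finset.sum_congr rfl fun w _ => ?_
    rw [Del_eq, Finset.mul_sum]
    refine Finset.sum_congr rfl fun w' _ => ?_
    ring
  -- RHS pieces
  have rhs1 : dser ψ (fun x => Del F x v) u
      = ∑ w ∈ wordsLe (Option Γ) L, F w * dser ψ (fun x => (shc w x v : k)) u := by
    show (∑ w' ∈ wordsLe (Option Γ) u.length, Del F w' v * dword ψ w' u) = _
    have hinner : ∀ w' ∈ wordsLe (Option Γ) u.length, Del F w' v * dword ψ w' u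
        = ∑ w ∈ wordsLe (Option Γ) L, F w * (shc w w' v : k) * dword ψ w' u := by
      intro w' hw'
      rw [Del_eq, Finset.sum_mul]
      refine Finset.sum_subset ?_ ?_
      · intro w hw
        rw [mem_wordsLe] at hw ⊢
        have := mem_wordsLe.1 hw'
        omega
      · intro w hw hnw
        rw [mem_wordsLe] at hw hnw
        rw [shc_length ?_, Nat.cast_zero, mul_zero, zero_mul]
        omega
    rw [Finset.sum_congr rfl hinner, Finset.sum_comm]
    refine Finset.sum_congr rfl fun w _ => ?_
    rw [show dser ψ (fun x => (shc w x v : k)) u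
      = ∑ w' ∈ wordsLe (Option Γ) u.length, (shc w w' v : k) * dword ψ w' u from rfl,
      Finset.mul_sum]
    refine Finset.sum_congr rfl fun w' _ => ?_
    ring
  have rhs2 : dser ψ (fun y => Del F u y) v
      = ∑ w ∈ wordsLe (Option Γ) L, F w * dser ψ (fun y => (shc w u y : k)) v := by
    show (∑ w' ∈ wordsLe (Option Γ) v.length, Del F u w' * dword ψ w' v) = _
    have hinner : ∀ w' ∈ wordsLe (Option Γ) v.length, Del F u w' * dword ψ w' v
        = ∑ w ∈ wordsLe (Option Γ) L, F w * (shc w u w' : k) * dword ψ w' v := by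
      intro w' hw'
      rw [Del_eq, Finset.sum_mul]
      refine Finset.sum_subset ?_ ?_
      · intro w hw
        rw [mem_wordsLe] at hw ⊢
        have := mem_wordsLe.1 hw'
        omega
      · intro w hw hnw
        rw [mem_wordsLe] at hw hnw
        rw [shc_length ?_, Nat.cast_zero, mul_zero, zero_mul]
        omega
    rw [Finset.sum_congr rfl hinner, Finset.sum_comm]
    refine Finset.sum_congr rfl fun w _ => ?_
    rw [show dser ψ (fun y => (shc w u y : k)) v
      = ∑ w' ∈ wordsLe (Option Γ) v.length, (shc w u w' : k) * dword ψ w' v from rfl,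
      Finset.mul_sum]
    refine Finset.sum_congr rfl fun w' _ => ?_
    ring
  rw [lhs1, rhs1, rhs2, ← Finset.sum_add_distrib]
  refine Finset.sum_congr rfl fun w _ => ?_
  rw [dword_coderiv ψ hψ0 hψ w u v, mul_add]

lemma sact_coderiv (hψ0 : ψ [] = 0) (hψ : PrimId ψ) (F : Ser (Option Γ) k)
    (u v : List (Option Γ)) :
    Del (sact ψ F) u v
      = sact ψ (fun x => Del F x v) u + sact ψ (fun y => Del F u y) v := by
  have : Del (sact ψ F) u v = Del (smul2 ψ F) u v + Del (dser ψ F) u v := by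
    rw [← Del_add]
    rfl
  rw [this, prim_mul_left hψ F, dser_coderiv ψ hψ0 hψ F u v]
  show _ = (smul2 ψ (fun x => Del F x v) u + dser ψ (fun x => Del F x v) u)
      + (smul2 ψ (fun y => Del F u y) v + dser ψ (fun y => Del F u y) v)
  ring

end Part7

section Part8

variable {Γ k : Type} [CommGroup Γ] [Fintype Γ] [DecidableEq Γ] [CommRing k]
variable (ψ : Ser (Option Γ) k)

set_option linter.unusedSectionVars false

lemma smul2_support (hψ0 : ψ [] = 0) {F : Ser (Option Γ) k} {m : ℕ}
    (hF : ∀ z : List (Option Γ), z.length < m → F z = 0) :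
    ∀ u : List (Option Γ), u.length < m + 1 → smul2 ψ F u = 0 := by
  intro u hu
  apply Finset.sum_eq_zero
  intro p hp
  rw [Finset.mem_range] at hp
  rcases Nat.eq_zero_or_pos p with hp0 | hp0
  · subst hp0
    rw [List.take_zero, hψ0, zero_mul]
  · rw [hF (u.drop p) ?_, mul_zero]
    rw [List.length_drop]
    omega

lemma dser_support (hψ0 : ψ [] = 0) {F : Ser (Option Γ) k} {m : ℕ}
    (hF : ∀ z : List (Option Γ), z.length < m → F z = 0) :
    ∀ u : List (Option Γ), u.length < m + 1 → dser ψ F u = 0 := by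
  intro u hu
  apply Finset.sum_eq_zero
  intro w hw
  rw [mem_wordsLe] at hw
  by_cases hwm : w.length < m
  · rw [hF w hwm, zero_mul]
  · rw [dword_short ψ hψ0 w u (by omega), mul_zero]

lemma sact_support (hψ0 : ψ [] = 0) {F : Ser (Option Γ) k} {m : ℕ}
    (hF : ∀ z : List (Option Γ), z.length < m → F z = 0) :
    ∀ u : List (Option Γ), u.length < m + 1 → sact ψ F u = 0 := by
  intro u hu
  show smul2 ψ F u + dser ψ F u = 0
  rw [smul2_support ψ hψ0 hF u hu, dser_support ψ hψ0 hF u hu, add_zero]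

lemma sact_iter_support (hψ0 : ψ [] = 0) (Φ : Ser (Option Γ) k) :
    ∀ (n : ℕ) (u : List (Option Γ)), u.length < n → ((sact ψ)^[n] Φ) u = 0 := by
  intro n
  induction n with
  | zero => intro u hu; omega
  | succ n ih =>
    intro u hu
    rw [Function.iterate_succ_apply']
    exact sact_support ψ hψ0 ih u hu

lemma sact_congr {F G : Ser (Option Γ) k} (h : ∀ w, F w = G w) (u : List (Option Γ)) :
    sact ψ F u = sact ψ G u := by
  show smul2 ψ F u + dser ψ F u = smul2 ψ G u + dser ψ G u
  rw [smul2_congr_right h, dser_congr ψ h]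

lemma dser_sum {ι : Type*} (s : Finset ι) (H : ι → Ser (Option Γ) k)
    (u : List (Option Γ)) :
    dser ψ (fun w => ∑ i ∈ s, H i w) u = ∑ i ∈ s, dser ψ (H i) u := by
  simp only [dser, Finset.sum_mul]
  rw [Finset.sum_comm]

lemma sact_sum {ι : Type*} (s : Finset ι) (c : ι → k) (F : ι → Ser (Option Γ) k)
    (u : List (Option Γ)) :
    sact ψ (fun x => ∑ i ∈ s, c i * F i x) u = ∑ i ∈ s, c i * sact ψ (F i) u := by
  show smul2 ψ _ u + dser ψ _ u = _
  rw [smul2_sum_right s ψ (fun i x => c i * F i x) u, dser_sum ψ s (fun i w => c i * F i w) u,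
    ← Finset.sum_add_distrib]
  refine Finset.sum_congr rfl fun i _ => ?_
  rw [smul2_smul_right, dser_smul]
  show c i * smul2 ψ (F i) u + c i * dser ψ (F i) u
    = c i * (smul2 ψ (F i) u + dser ψ (F i) u)
  ring

lemma Del_sact_iter (hψ0 : ψ [] = 0) (hψ : PrimId ψ) (Φ : Ser (Option Γ) k)
    (hΦ : ∀ u v, Del Φ u v = Φ u * Φ v) :
    ∀ (n : ℕ) (u v : List (Option Γ)),
      Del ((sact ψ)^[n] Φ) u v
        = ∑ i ∈ Finset.range (n + 1),
            (n.choose i : k) * ((sact ψ)^[i] Φ u) * ((sact ψ)^[n - i] Φ v) := by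
  intro n
  induction n with
  | zero =>
    intro u v
    rw [Finset.sum_range_one]
    simp only [Function.iterate_zero, id_eq, Nat.choose_self, Nat.cast_one, Nat.zero_sub]
    rw [hΦ u v]
    ring
  | succ n ih =>
    intro u v
    rw [Function.iterate_succ_apply', sact_coderiv ψ hψ0 hψ]
    have e1 : sact ψ (fun x => Del ((sact ψ)^[n] Φ) x v) u
        = ∑ i ∈ Finset.range (n + 1),
            ((n.choose i : k) * ((sact ψ)^[n - i] Φ v)) * ((sact ψ)^[i + 1] Φ u) := by
      have hfun : ∀ x, Del ((sact ψ)^[n] Φ) x v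
          = ∑ i ∈ Finset.range (n + 1),
              ((n.choose i : k) * ((sact ψ)^[n - i] Φ v)) * ((sact ψ)^[i] Φ x) := by
        intro x
        rw [ih x v]
        exact Finset.sum_congr rfl fun i _ => by ring
      rw [sact_congr ψ hfun, sact_sum]
      refine Finset.sum_congr rfl fun i _ => ?_
      rw [Function.iterate_succ_apply' (sact ψ) i Φ]
    have e2 : sact ψ (fun y => Del ((sact ψ)^[n] Φ) u y) v
        = ∑ i ∈ Finset.range (n + 1),
            ((n.choose i : k) * ((sact ψ)^[i] Φ u)) * ((sact ψ)^[n - i + 1] Φ v) := by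
      have hfun : ∀ y, Del ((sact ψ)^[n] Φ) u y
          = ∑ i ∈ Finset.range (n + 1),
              ((n.choose i : k) * ((sact ψ)^[i] Φ u)) * ((sact ψ)^[n - i] Φ y) := by
        intro y
        rw [ih u y]
      rw [sact_congr ψ hfun, sact_sum]
      refine Finset.sum_congr rfl fun i _ => ?_
      rw [Function.iterate_succ_apply' (sact ψ) (n - i) Φ]
    rw [e1, e2]
    -- RHS Pascal decomposition
    conv_rhs => rw [Finset.sum_range_succ']
    have hrhs : ∀ i ∈ Finset.range (n + 1),
        ((n + 1).choose (i + 1) : k) * ((sact ψ)^[i + 1] Φ u)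
            * ((sact ψ)^[n + 1 - (i + 1)] Φ v)
        = (n.choose i : k) * ((sact ψ)^[i + 1] Φ u) * ((sact ψ)^[n - i] Φ v)
          + (n.choose (i + 1) : k) * ((sact ψ)^[i + 1] Φ u) * ((sact ψ)^[n - i] Φ v) := by
      intro i _
      rw [Nat.succ_sub_succ, Nat.choose_succ_succ, Nat.cast_add]
      ring
    rw [Finset.sum_congr rfl hrhs, Finset.sum_add_distrib]
    have hB : ∑ i ∈ Finset.range (n + 1),
        (n.choose (i + 1) : k) * ((sact ψ)^[i + 1] Φ u) * ((sact ψ)^[n - i] Φ v)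
        = ∑ i ∈ Finset.range n,
            (n.choose (i + 1) : k) * ((sact ψ)^[i + 1] Φ u) * ((sact ψ)^[n - i] Φ v) := by
      rw [Finset.sum_range_succ, Nat.choose_succ_self, Nat.cast_zero, zero_mul, zero_mul,
        add_zero]
    have hL2 : ∑ i ∈ Finset.range (n + 1),
        ((n.choose i : k) * ((sact ψ)^[i] Φ u)) * ((sact ψ)^[n - i + 1] Φ v)
        = (∑ i ∈ Finset.range n,
            (n.choose (i + 1) : k) * ((sact ψ)^[i + 1] Φ u) * ((sact ψ)^[n - i] Φ v))
          + ((n.choose 0 : k) * ((sact ψ)^[0] Φ u)) * ((sact ψ)^[n + 1] Φ v) := by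
      rw [Finset.sum_range_succ']
      have hstep : ∀ i ∈ Finset.range n,
          ((n.choose (i + 1) : k) * ((sact ψ)^[i + 1] Φ u)) * ((sact ψ)^[n - (i + 1) + 1] Φ v)
          = (n.choose (i + 1) : k) * ((sact ψ)^[i + 1] Φ u) * ((sact ψ)^[n - i] Φ v) := by
        intro i hi
        rw [Finset.mem_range] at hi
        rw [show n - (i + 1) + 1 = n - i from by omega]
      rw [Finset.sum_congr rfl hstep, show n - 0 + 1 = n + 1 from by omega]
    rw [hB, hL2]
    have hfirst : ∑ i ∈ Finset.range (n + 1),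
        ((n.choose i : k) * ((sact ψ)^[n - i] Φ v)) * ((sact ψ)^[i + 1] Φ u)
        = ∑ i ∈ Finset.range (n + 1),
            (n.choose i : k) * ((sact ψ)^[i + 1] Φ u) * ((sact ψ)^[n - i] Φ v) := by
      exact Finset.sum_congr rfl fun i _ => by ring
    rw [hfirst]
    have hzero : ((n + 1).choose 0 : k) * ((sact ψ)^[0] Φ u) * ((sact ψ)^[n + 1 - 0] Φ v)
        = ((n.choose 0 : k) * ((sact ψ)^[0] Φ u)) * ((sact ψ)^[n + 1] Φ v) := by
      rw [Nat.sub_zero, Nat.choose_zero_right, Nat.choose_zero_right]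
    rw [hzero]
    ring

lemma Del_congr_on {F G : Ser (Option Γ) k} (u v : List (Option Γ))
    (h : ∀ w : List (Option Γ), w.length ≤ u.length + v.length → F w = G w) :
    Del F u v = Del G u v := by
  unfold Del
  refine Finset.sum_congr rfl fun w hw => ?_
  rw [h w (mem_wordsLe.1 hw)]

lemma coeff_id {k : Type} [CommRing k] [Algebra ℚ k] (n i : ℕ) (h : i ≤ n) :
    algebraMap ℚ k ((n.factorial : ℚ))⁻¹ * (n.choose i : k)
      = algebraMap ℚ k ((i.factorial : ℚ))⁻¹
        * algebraMap ℚ k (((n - i).factorial : ℚ))⁻¹ := by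
  have hcast : ((n.choose i : ℕ) : k) = algebraMap ℚ k ((n.choose i : ℕ) : ℚ) := by
    rw [map_natCast]
  rw [hcast, ← map_mul, ← map_mul]
  congr 1
  have key : ((n.choose i : ℕ) : ℚ) * (i.factorial : ℚ) * ((n - i).factorial : ℚ)
      = (n.factorial : ℚ) := by
    exact_mod_cast congrArg (Nat.cast : ℕ → ℚ) (Nat.choose_mul_factorial_mul_factorial h)
  have h1 : (n.factorial : ℚ) ≠ 0 := Nat.cast_ne_zero.2 (Nat.factorial_ne_zero n)
  have h2 : (i.factorial : ℚ) ≠ 0 := Nat.cast_ne_zero.2 (Nat.factorial_ne_zero i)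
  have h3 : ((n - i).factorial : ℚ) ≠ 0 := Nat.cast_ne_zero.2 (Nat.factorial_ne_zero (n - i))
  field_simp
  linear_combination key

lemma triangle_reindex {M : Type*} [AddCommMonoid M] (L : ℕ) (g : ℕ → ℕ → M) :
    ∑ n ∈ Finset.range (L + 1), ∑ i ∈ Finset.range (n + 1), g i (n - i)
      = ∑ i ∈ Finset.range (L + 1), ∑ j ∈ Finset.range (L + 1 - i), g i j := by
  rw [Finset.sum_sigma', Finset.sum_sigma']
  refine Finset.sum_nbij' (fun a => ⟨a.2, a.1 - a.2⟩) (fun b => ⟨b.1 + b.2, b.1⟩)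
    ?_ ?_ ?_ ?_ ?_
  · rintro ⟨n, i⟩ hmem
    simp only [Finset.mem_sigma, Finset.mem_range] at hmem ⊢
    omega
  · rintro ⟨i, j⟩ hmem
    simp only [Finset.mem_sigma, Finset.mem_range] at hmem ⊢
    omega
  · rintro ⟨n, i⟩ hmem
    simp only [Finset.mem_sigma, Finset.mem_range] at hmem
    dsimp only
    exact sigma_mk_eq (by omega) (heq_of_eq rfl)
  · rintro ⟨i, j⟩ hmem
    simp only [Finset.mem_sigma, Finset.mem_range] at hmem
    dsimp only
    exact sigma_mk_eq rfl (heq_of_eq (by omega))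
  · rintro ⟨n, i⟩ _
    rfl

end Part8

/-- If Φ is group-like for Δ and ψ is primitive with zero constant
term, then `exp(s_ψ)(Φ)` is group-like for Δ, where `s_ψ(φ) = ψφ + d_ψ(φ)` and `d_ψ` is
the special derivation with `d_ψ(x₀) = 0`, `d_ψ(x_σ) = [x_σ, t_σ(ψ)]`. -/
theorem expS_grouplike {Γ k : Type} [CommGroup Γ] [Fintype Γ] [DecidableEq Γ]
    [CommRing k] [Algebra ℚ k] (Φ ψ : Ser (Option Γ) k)
    (hΦ : IsGroupLike Φ) (hψ : IsPrimitive ψ) (hψ0 : ψ [] = 0) :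
    IsGroupLike (expS ψ Φ) := by
  have hψ' : PrimId ψ := hψ
  constructor
  · show (∑ n ∈ Finset.range (([] : List (Option Γ)).length + 1), _) = 1
    rw [show ([] : List (Option Γ)).length + 1 = 1 from rfl, Finset.sum_range_one]
    simp [hΦ.1]
  · intro u v
    have htrunc : ∀ w : List (Option Γ), w.length ≤ u.length + v.length →
        expS ψ Φ w = ∑ n ∈ Finset.range (u.length + v.length + 1),
          algebraMap ℚ k ((n.factorial : ℚ))⁻¹ * ((sact ψ)^[n] Φ) w := by
      intro w hw
      refine Finset.sum_subset ?_ ?_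
      · intro n hn
        rw [Finset.mem_range] at hn ⊢
        omega
      · intro n hn hnn
        rw [Finset.mem_range] at hnn
        rw [sact_iter_support ψ hψ0 Φ n w (by omega), mul_zero]
    rw [Del_congr_on u v htrunc,
      Del_sum (Finset.range (u.length + v.length + 1))
        (fun n => fun w => algebraMap ℚ k ((n.factorial : ℚ))⁻¹ * ((sact ψ)^[n] Φ) w) u v]
    have h2 : ∀ n ∈ Finset.range (u.length + v.length + 1),
        Del (fun w => algebraMap ℚ k ((n.factorial : ℚ))⁻¹ * ((sact ψ)^[n] Φ) w) u v
        = ∑ i ∈ Finset.range (n + 1),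
            (algebraMap ℚ k ((i.factorial : ℚ))⁻¹ * ((sact ψ)^[i] Φ) u)
            * (algebraMap ℚ k (((n - i).factorial : ℚ))⁻¹ * ((sact ψ)^[n - i] Φ) v) := by
      intro n _
      rw [Del_smul, Del_sact_iter ψ hψ0 hψ' Φ hΦ.2 n u v, Finset.mul_sum]
      refine Finset.sum_congr rfl fun i hi => ?_
      rw [Finset.mem_range] at hi
      rw [show algebraMap ℚ k ((n.factorial : ℚ))⁻¹
            * ((n.choose i : k) * ((sact ψ)^[i] Φ u) * ((sact ψ)^[n - i] Φ v))
          = (algebraMap ℚ k ((n.factorial : ℚ))⁻¹ * (n.choose i : k))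
            * (((sact ψ)^[i] Φ u) * ((sact ψ)^[n - i] Φ v)) from by ring,
        coeff_id n i (by omega)]
      ring
    rw [Finset.sum_congr rfl h2,
      triangle_reindex (u.length + v.length)
        (fun i j => (algebraMap ℚ k ((i.factorial : ℚ))⁻¹ * ((sact ψ)^[i] Φ) u)
          * (algebraMap ℚ k ((j.factorial : ℚ))⁻¹ * ((sact ψ)^[j] Φ) v))]
    have h3 : ∑ i ∈ Finset.range (u.length + v.length + 1),
        ∑ j ∈ Finset.range (u.length + v.length + 1 - i),
          (algebraMap ℚ k ((i.factorial : ℚ))⁻¹ * ((sact ψ)^[i] Φ) u)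
          * (algebraMap ℚ k ((j.factorial : ℚ))⁻¹ * ((sact ψ)^[j] Φ) v)
        = ∑ i ∈ Finset.range (u.length + 1),
            ∑ j ∈ Finset.range (u.length + v.length + 1 - i),
              (algebraMap ℚ k ((i.factorial : ℚ))⁻¹ * ((sact ψ)^[i] Φ) u)
              * (algebraMap ℚ k ((j.factorial : ℚ))⁻¹ * ((sact ψ)^[j] Φ) v) := by
      refine (Finset.sum_subset ?_ ?_).symm
      · intro i hi
        rw [Finset.mem_range] at hi ⊢
        omega
      · intro i hi hin
        rw [Finset.mem_range] at hin
        apply Finset.sum_eq_zero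
        intro j _
        rw [sact_iter_support ψ hψ0 Φ i u (by omega), mul_zero, zero_mul]
    rw [h3]
    have h4 : ∀ i ∈ Finset.range (u.length + 1),
        (∑ j ∈ Finset.range (u.length + v.length + 1 - i),
          (algebraMap ℚ k ((i.factorial : ℚ))⁻¹ * ((sact ψ)^[i] Φ) u)
          * (algebraMap ℚ k ((j.factorial : ℚ))⁻¹ * ((sact ψ)^[j] Φ) v))
        = (algebraMap ℚ k ((i.factorial : ℚ))⁻¹ * ((sact ψ)^[i] Φ) u) * expS ψ Φ v := by
      intro i hi
      rw [Finset.mem_range] at hi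
      rw [← Finset.mul_sum]
      congr 1
      refine (Finset.sum_subset ?_ ?_).symm
      · intro j hj
        rw [Finset.mem_range] at hj ⊢
        omega
      · intro j hj hjn
        rw [Finset.mem_range] at hjn
        rw [sact_iter_support ψ hψ0 Φ j v (by omega), mul_zero]
    rw [Finset.sum_congr rfl h4, ← Finset.sum_mul]
    rfl
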